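/- arXiv:2307.11923 — 5 statements merged into one kernel-verified Lean document; each statement's English description precedes it below -/
import Mathlib

section
/- For ω > 0, (ω³/(6π)) ∫₀^{2π/ω} ∫₀^τ ∫₀^s sin(ωτ)(cos(ωs) sin(ωp) - sin(ωs) cos(ωp)) dp ds dτ = 1/2. -/
open Real intervalIntegral

/-! Since `cos (ω s) sin (ω p) - sin (ω s) cos (ω p) = sin (ω p - ω s)`, the substitution
`x = ω · (variable)` in each of the three nested integrals reduces the computation to `ω = 1`
at the cost of a factor `ω⁻¹` per layer. For `ω = 1` the layers are elementary:
`∫₀ˢ sin (p - s) dp = cos s - 1`, `∫₀ᵗ (cos s - 1) ds = sin t - t`, and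
`∫₀^{2π} sin x (sin x - x) dx = π + 2π = 3π`, so the triple integral equals `3π / ω³`. -/

lemma integral_sin_sub_right (s : ℝ) : ∫ p in (0:ℝ)..s, sin (p - s) = cos s - 1 := by
  rw [integral_comp_sub_right, integral_sin]
  simp

lemma integral_cos_sub_one (t : ℝ) : ∫ s in (0:ℝ)..t, (cos s - 1) = sin t - t := by
  rw [integral_sub intervalIntegral.intervalIntegrable_cos intervalIntegrable_const, integral_cos]
  simp

lemma integral_id_mul_sin (a b : ℝ) :
    ∫ x in a..b, x * sin x = (sin b - b * cos b) - (sin a - a * cos a) := by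
  refine integral_eq_sub_of_hasDerivAt (f := fun x => sin x - x * cos x) (fun x _ => ?_)
    ((by fun_prop : Continuous fun x => x * sin x).intervalIntegrable _ _)
  exact ((hasDerivAt_sin x).sub ((hasDerivAt_id' x).mul (hasDerivAt_cos x))).congr_deriv (by ring)

lemma integral_sin_mul_sin_sub_id : ∫ x in (0:ℝ)..2 * π, sin x * (sin x - x) = 3 * π := by
  have h : ∀ x, sin x * (sin x - x) = sin x ^ 2 - x * sin x := fun x => by ring
  simp_rw [h]
  rw [integral_sub (by apply Continuous.intervalIntegrable; fun_prop)
    (by apply Continuous.intervalIntegrable; fun_prop), integral_sin_sq, integral_id_mul_sin]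
  simp only [sin_zero, cos_zero, sin_two_pi, cos_two_pi]
  ring

lemma integral_zero_comp_mul_left (f : ℝ → ℝ) {c : ℝ} (hc : c ≠ 0) (b : ℝ) :
    ∫ x in (0:ℝ)..b, f (c * x) = c⁻¹ * ∫ x in (0:ℝ)..c * b, f x := by
  rw [integral_comp_mul_left f hc, mul_zero, smul_eq_mul]

lemma integral_sin_mul_sub {ω : ℝ} (hω : ω ≠ 0) (s : ℝ) :
    ∫ p in (0:ℝ)..s, (cos (ω * s) * sin (ω * p) - sin (ω * s) * cos (ω * p)) =
      ω⁻¹ * (cos (ω * s) - 1) := by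
  have h : ∀ p, cos (ω * s) * sin (ω * p) - sin (ω * s) * cos (ω * p) = sin (ω * p - ω * s) :=
    fun p => by rw [sin_sub]; ring
  simp_rw [h]
  rw [integral_zero_comp_mul_left (fun x => sin (x - ω * s)) hω, integral_sin_sub_right]

lemma integral_integral_sin_mul_sub {ω : ℝ} (hω : ω ≠ 0) (t : ℝ) :
    ∫ s in (0:ℝ)..t, ∫ p in (0:ℝ)..s, (cos (ω * s) * sin (ω * p) - sin (ω * s) * cos (ω * p)) =
      ω⁻¹ ^ 2 * (sin (ω * t) - ω * t) := by
  simp_rw [integral_sin_mul_sub hω, integral_const_mul]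
  rw [integral_zero_comp_mul_left (fun x => cos x - 1) hω, integral_cos_sub_one]
  ring

theorem stmt_6 (ω : ℝ) (hω : 0 < ω) :
    (ω ^ 3 / (6 * π)) *
      ∫ τ in (0:ℝ)..(2 * π / ω), ∫ s in (0:ℝ)..τ, ∫ p in (0:ℝ)..s,
        Real.sin (ω * τ) *
          (Real.cos (ω * s) * Real.sin (ω * p) -
           Real.sin (ω * s) * Real.cos (ω * p)) = 1/2 := by
  have hω' : ω ≠ 0 := hω.ne'
  have triple : ∫ τ in (0:ℝ)..(2 * π / ω), ∫ s in (0:ℝ)..τ, ∫ p in (0:ℝ)..s,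
      sin (ω * τ) * (cos (ω * s) * sin (ω * p) - sin (ω * s) * cos (ω * p)) =
        ω⁻¹ ^ 3 * (3 * π) := by
    simp_rw [integral_const_mul, integral_integral_sin_mul_sub hω']
    calc ∫ τ in (0:ℝ)..(2 * π / ω), sin (ω * τ) * (ω⁻¹ ^ 2 * (sin (ω * τ) - ω * τ))
        = ω⁻¹ ^ 2 * ∫ τ in (0:ℝ)..(2 * π / ω), sin (ω * τ) * (sin (ω * τ) - ω * τ) := by
          simp_rw [mul_left_comm _ (ω⁻¹ ^ 2), integral_const_mul]
      _ = ω⁻¹ ^ 3 * (3 * π) := by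
          rw [integral_zero_comp_mul_left (fun x => sin x * (sin x - x)) hω',
            mul_div_cancel₀ _ hω', integral_sin_mul_sin_sub_id]
          ring
  rw [triple]
  field_simp
  ring
end

section
/- For ω > 0, ∫₀^{2π/ω} ∫₀^τ ∫₀^s cos(ωτ)(cos(ωs) sin(ωp) - sin(ωs) cos(ωp)) dp ds dτ = 0. -/
/-! The integrand is `cos (ω τ) * sin (ω (p - s))`, so the iterated integral can be computed
from the inside out in closed form; the outermost integrand has a primitive taking the value
`-1 / ω ^ 3` at both ends of the period `[0, 2π/ω]`. -/

open Real intervalIntegral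

lemma integral_sin_mul_sub_mul (ω s : ℝ) (hω : ω ≠ 0) :
    ∫ p in (0:ℝ)..s, sin (ω * p - ω * s) = (cos (ω * s) - 1) / ω := by
  rw [integral_comp_mul_sub (fun x => sin x) hω, integral_sin]
  simp [div_eq_inv_mul]

lemma integral_cos_mul_sub_one_div (ω τ : ℝ) (hω : ω ≠ 0) :
    ∫ s in (0:ℝ)..τ, (cos (ω * s) - 1) / ω = (sin (ω * τ) / ω - τ) / ω := by
  rw [integral_div, integral_sub (Continuous.intervalIntegrable (by fun_prop) _ _)
      intervalIntegrable_const, integral_comp_mul_left (fun x => cos x) hω, integral_cos]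
  simp [div_eq_inv_mul]

lemma integral_cos_mul_sin_div_sub_div_eq_zero (ω : ℝ) (hω : ω ≠ 0) :
    ∫ τ in (0:ℝ)..(2 * π / ω), cos (ω * τ) * ((sin (ω * τ) / ω - τ) / ω) = 0 := by
  have hprimitive (x : ℝ) :
      HasDerivAt (fun τ => (sin (ω * τ) ^ 2 / 2 - ω * τ * sin (ω * τ) - cos (ω * τ)) / ω ^ 3)
        (cos (ω * x) * ((sin (ω * x) / ω - x) / ω)) x := by
    have hlin : HasDerivAt (fun τ => ω * τ) ω x := by
      simpa using (hasDerivAt_id x).const_mul ω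
    have hsin : HasDerivAt (fun τ => sin (ω * τ)) (cos (ω * x) * ω) x :=
      (hasDerivAt_sin (ω * x)).comp x hlin
    have hcos : HasDerivAt (fun τ => cos (ω * τ)) (-sin (ω * x) * ω) x :=
      (hasDerivAt_cos (ω * x)).comp x hlin
    refine ((((hsin.pow 2).div_const 2).sub (hlin.mul hsin)).sub hcos).div_const (ω ^ 3)
      |>.congr_deriv ?_
    field_simp
    ring
  rw [integral_eq_sub_of_hasDerivAt (fun x _ => hprimitive x)
      (Continuous.intervalIntegrable (by fun_prop) _ _), mul_div_cancel₀ _ hω]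
  simp

theorem stmt_7 (ω : ℝ) (hω : 0 < ω) :
    (∫ τ in (0:ℝ)..(2 * π / ω), ∫ s in (0:ℝ)..τ, ∫ p in (0:ℝ)..s,
        Real.cos (ω * τ) *
          (Real.cos (ω * s) * Real.sin (ω * p) -
           Real.sin (ω * s) * Real.cos (ω * p))) = 0 := by
  have hω₀ := hω.ne'
  have hsin_sub (s p : ℝ) :
      cos (ω * s) * sin (ω * p) - sin (ω * s) * cos (ω * p) = sin (ω * p - ω * s) := by
    rw [sin_sub]
    ring
  simp_rw [hsin_sub, integral_const_mul, integral_sin_mul_sub_mul ω _ hω₀,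
    integral_cos_mul_sub_one_div ω _ hω₀]
  exact integral_cos_mul_sin_div_sub_div_eq_zero ω hω₀
end

section
/- For ω > 0, (ω³/(6π)) ∫₀^{2π/ω} ∫₀^τ ∫₀^s cos(ωτ)(cos(2ωs) cos(ωp) - cos(ωs) cos(2ωp)) dp ds dτ = 1/8. -/
/-! Each layer is an elementary integral after the substitution `x = ω t`. The innermost one
collapses to `-sin (ω s) ^ 3 / ω` because `cos 2x sin x - cos x sin 2x / 2 = -sin³ x`; integrating
`sin³` gives a cubic in `cos (ω τ)`, and over a full period `∫ cos² = π`, `∫ cos⁴ = 3π/4` and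
`∫ cos = 0`, so the outer integral is `(π - π/4) / ω³`. -/

open Real intervalIntegral

theorem integral_cos_mul_sub_cos_mul {ω : ℝ} (hω : ω ≠ 0) (s : ℝ) :
    ∫ p in (0:ℝ)..s, (cos (2 * ω * s) * cos (ω * p) - cos (ω * s) * cos (2 * ω * p)) =
      -sin (ω * s) ^ 3 / ω := by
  have h2ω : 2 * ω ≠ 0 := mul_ne_zero two_ne_zero hω
  rw [integral_sub, integral_const_mul, integral_const_mul, integral_comp_mul_left _ hω,
    integral_comp_mul_left _ h2ω, integral_cos, integral_cos]
  · simp only [mul_zero, sin_zero, sub_zero, smul_eq_mul]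
    rw [mul_assoc, cos_two_mul, sin_two_mul]
    field_simp
    linear_combination sin (ω * s) * sin_sq_add_cos_sq (ω * s)
  all_goals exact (by fun_prop : Continuous _).intervalIntegrable _ _

theorem integral_sin_mul_pow_three {ω : ℝ} (hω : ω ≠ 0) (τ : ℝ) :
    ∫ s in (0:ℝ)..τ, sin (ω * s) ^ 3 = (2 / 3 - cos (ω * τ) + cos (ω * τ) ^ 3 / 3) / ω := by
  rw [integral_comp_mul_left (fun x => sin x ^ 3) hω, integral_sin_pow_three]
  simp only [mul_zero, cos_zero, smul_eq_mul]
  field_simp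
  ring

theorem integral_cos_mul_cos_sub_cos_pow_three_div_three {ω : ℝ} (hω : ω ≠ 0) :
    ∫ τ in (0:ℝ)..(2 * π / ω), cos (ω * τ) * (cos (ω * τ) - cos (ω * τ) ^ 3 / 3 - 2 / 3) =
      3 * π / (4 * ω) := by
  have hperiod : ω * (2 * π / ω) = 2 * π := by field_simp
  have hexpand : ∀ x, cos x * (cos x - cos x ^ 3 / 3 - 2 / 3) =
      cos x ^ 2 - cos x ^ (2 + 2) / 3 - 2 / 3 * cos x := fun x => by ring
  rw [integral_comp_mul_left (fun x => cos x * (cos x - cos x ^ 3 / 3 - 2 / 3)) hω]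
  simp only [hexpand, mul_zero, hperiod]
  rw [integral_sub, integral_sub, integral_div, integral_const_mul, integral_cos_pow (n := 2),
    integral_cos_sq, integral_cos]
  · simp only [sin_two_pi, sin_zero, smul_eq_mul]
    field_simp
    ring
  all_goals exact (by fun_prop : Continuous _).intervalIntegrable _ _

theorem stmt_9 (ω : ℝ) (hω : 0 < ω) :
    (ω ^ 3 / (6 * π)) *
      ∫ τ in (0:ℝ)..(2 * π / ω), ∫ s in (0:ℝ)..τ, ∫ p in (0:ℝ)..s,
        Real.cos (ω * τ) *
          (Real.cos (2 * ω * s) * Real.cos (ω * p) -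
           Real.cos (ω * s) * Real.cos (2 * ω * p)) = 1/8 := by
  have hω0 : ω ≠ 0 := hω.ne'
  have hinner : ∀ τ, (∫ s in (0:ℝ)..τ, ∫ p in (0:ℝ)..s, cos (ω * τ) *
      (cos (2 * ω * s) * cos (ω * p) - cos (ω * s) * cos (2 * ω * p))) =
      cos (ω * τ) * (cos (ω * τ) - cos (ω * τ) ^ 3 / 3 - 2 / 3) / ω ^ 2 := fun τ => by
    simp only [integral_const_mul, integral_cos_mul_sub_cos_mul hω0, integral_div, integral_neg,
      integral_sin_mul_pow_three hω0]
    field_simp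
    ring
  simp only [hinner, integral_div, integral_cos_mul_cos_sub_cos_pow_three_div_three hω0]
  field_simp
  ring
end

section
/- Let α, ω₀ > 0, J₀ = [[0, ω₀], [-ω₀, 0]], Λ̃ = [[0, 0], [0, -α/2]], and P = [[α/(4ω₀²) + 2/α, 1/(2ω₀)], [1/(2ω₀), 2/α]]. Then P is symmetric positive definite and P(J₀ + Λ̃) + (J₀ + Λ̃)ᵀ P = -I. -/
open Matrix

theorem Matrix.posDef_fin_two_of_pos_of_det_pos {K : Type*} [Field K] [LinearOrder K]
    [IsStrictOrderedRing K] [StarRing K] [TrivialStar K] {a b c : K}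
    (ha : 0 < a) (hdet : 0 < a * c - b ^ 2) : (!![a, b; b, c]).PosDef := by
  refine posDef_iff_dotProduct_mulVec.mpr ⟨?_, fun x hx ↦ ?_⟩
  · rw [isHermitian_iff_isSymm]
    ext i j
    fin_cases i <;> fin_cases j <;> rfl
  -- multiplying the quadratic form by `a > 0` lets us complete the square
  have hq : a * (star x ⬝ᵥ (!![a, b; b, c] *ᵥ x))
      = (a * x 0 + b * x 1) ^ 2 + (a * c - b ^ 2) * x 1 ^ 2 := by
    simp [dotProduct, mulVec, Fin.sum_univ_two]
    ring
  refine pos_of_mul_pos_right (hq ▸ ?_) ha.le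
  by_cases h1 : x 1 = 0
  · have h0 : x 0 ≠ 0 := fun h0 ↦ hx (funext fun i ↦ by fin_cases i <;> simp [h0, h1])
    simp only [h1, mul_zero, add_zero, ne_eq, OfNat.ofNat_ne_zero, not_false_eq_true,
      zero_pow]
    positivity
  · exact add_pos_of_nonneg_of_pos (sq_nonneg _) (mul_pos hdet (pow_two_pos_of_ne_zero h1))

theorem dampedOscillator_lyapunov_eq {α ω₀ : ℝ} (hα : α ≠ 0) (hω₀ : ω₀ ≠ 0) :
    !![α/(4*ω₀^2) + 2/α, 1/(2*ω₀); 1/(2*ω₀), 2/α] * !![0, ω₀; -ω₀, -α/2]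
      + (!![0, ω₀; -ω₀, -α/2])ᵀ * !![α/(4*ω₀^2) + 2/α, 1/(2*ω₀); 1/(2*ω₀), 2/α]
      = (-1 : Matrix (Fin 2) (Fin 2) ℝ) := by
  ext i j
  fin_cases i <;> fin_cases j <;> simp [mul_apply, Fin.sum_univ_two] <;> field_simp <;> ring

theorem stmt_11 (α ω₀ : ℝ) (hα : 0 < α) (hω₀ : 0 < ω₀)
    (J₀ Λ P : Matrix (Fin 2) (Fin 2) ℝ)
    (hJ : J₀ = !![0, ω₀; -ω₀, 0])
    (hΛ : Λ = !![0, 0; 0, -α/2])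
    (hP : P = !![α/(4*ω₀^2) + 2/α, 1/(2*ω₀); 1/(2*ω₀), 2/α]) :
    P.IsSymm ∧ P.PosDef ∧ P * (J₀ + Λ) + (J₀ + Λ)ᵀ * P = -1 := by
  have hdet : (α/(4*ω₀^2) + 2/α) * (2/α) - (1/(2*ω₀)) ^ 2 = 1/(4*ω₀^2) + 4/α^2 := by
    field_simp
    ring
  have hPD : P.PosDef :=
    hP ▸ posDef_fin_two_of_pos_of_det_pos (by positivity) (hdet ▸ by positivity)
  have hA : J₀ + Λ = !![0, ω₀; -ω₀, -α/2] := by simp [hJ, hΛ]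
  refine ⟨isHermitian_iff_isSymm.mp hPD.isHermitian, hPD, ?_⟩
  rw [hA, hP]
  exact dampedOscillator_lyapunov_eq hα.ne' hω₀.ne'
end

section
/- Let α, ω₀ > 0, A = [[0, ω₀], [-ω₀, -α/2]], Λ̃ = [[0,0],[0,-α/2]], P the solution of PA + AᵀP = -I as above, G = PΛ̃ + Λ̃ᵀP, and b = ‖G‖²/(2λ_min(P)). Then for all z ∈ ℝ² and u ∈ ℝ, -|z|² + (e^u - 1)⟨z, Gz⟩ - b(e^u - 1)²(1 + ⟨z, Pz⟩) ≤ -(1/2)|z|² - b(e^u - 1)². -/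
/-!
With `s = eᵘ - 1`, the cross term is at most `|s| ‖G‖ ‖z‖²`, and since
`λ_min(P) ‖z‖² ≤ ⟨z, Pz⟩` the penalty `b s² ⟨z, Pz⟩` is at least `‖G‖² s² ‖z‖² / 2`; the weight
`b = ‖G‖² / (2 λ_min(P))` is exactly what makes these combine into `‖z‖² (1 - |s| ‖G‖)² / 2 ≥ 0`.
Here `λ_min(P) > 0` because the explicit `P` has positive trace and determinant.
-/

open Matrix RealInnerProductSpace Polynomial

open scoped MatrixOrder in
theorem Matrix.IsHermitian.mul_norm_sq_le_inner_toEuclideanCLM {n : Type*} [Fintype n]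
    [DecidableEq n] {P : Matrix n n ℝ} (hP : P.IsHermitian) {l : ℝ}
    (hl : ∀ μ : ℝ, P.charpoly.IsRoot μ → l ≤ μ) (z : EuclideanSpace ℝ n) :
    l * ‖z‖ ^ 2 ≤ ⟪z, toEuclideanCLM (𝕜 := ℝ) P z⟫ := by
  have hle : algebraMap ℝ (Matrix n n ℝ) l ≤ P :=
    (algebraMap_le_iff_le_spectrum hP.isSelfAdjoint).mpr fun μ hμ =>
      hl μ (mem_spectrum_iff_isRoot_charpoly.mp hμ)
  have hpos := (Matrix.le_iff.mp hle).dotProduct_mulVec_nonneg (WithLp.ofLp z)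
  rw [star_trivial, ← inner_toEuclideanCLM, map_sub, Algebra.algebraMap_eq_smul_one, map_smul,
    map_one] at hpos
  simpa [inner_sub_right, real_inner_smul_right, real_inner_self_eq_norm_sq] using hpos

theorem Matrix.pos_of_isRoot_charpoly_fin_two {M : Matrix (Fin 2) (Fin 2) ℝ}
    (htr : 0 < M.trace) (hdet : 0 < M.det) {μ : ℝ} (hμ : M.charpoly.IsRoot μ) : 0 < μ := by
  rw [charpoly_fin_two, IsRoot.def] at hμ
  simp only [eval_add, eval_sub, eval_mul, eval_pow, eval_X, eval_C] at hμ
  nlinarith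

theorem abs_inner_apply_self_le {E : Type*} [NormedAddCommGroup E] [InnerProductSpace ℝ E]
    (T : E →L[ℝ] E) (z : E) : |⟪z, T z⟫| ≤ ‖T‖ * ‖z‖ ^ 2 :=
  calc |⟪z, T z⟫| ≤ ‖z‖ * ‖T z‖ := abs_real_inner_le_norm _ _
    _ ≤ ‖z‖ * (‖T‖ * ‖z‖) := by gcongr; exact T.le_opNorm z
    _ = ‖T‖ * ‖z‖ ^ 2 := by ring

theorem neg_norm_sq_add_inner_sub_penalty_le {E : Type*} [NormedAddCommGroup E]
    [InnerProductSpace ℝ E] (T S : E →L[ℝ] E) {l : ℝ} (hl : 0 < l)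
    (hS : ∀ z, l * ‖z‖ ^ 2 ≤ ⟪z, S z⟫) (z : E) (s : ℝ) :
    -‖z‖ ^ 2 + s * ⟪z, T z⟫ - ‖T‖ ^ 2 / (2 * l) * s ^ 2 * (1 + ⟪z, S z⟫)
      ≤ -(1 / 2) * ‖z‖ ^ 2 - ‖T‖ ^ 2 / (2 * l) * s ^ 2 := by
  have hcross : s * ⟪z, T z⟫ ≤ |s| * ‖T‖ * ‖z‖ ^ 2 := by
    calc s * ⟪z, T z⟫ ≤ |s| * |⟪z, T z⟫| := by rw [← abs_mul]; exact le_abs_self _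
      _ ≤ |s| * (‖T‖ * ‖z‖ ^ 2) := by gcongr; exact abs_inner_apply_self_le T z
      _ = |s| * ‖T‖ * ‖z‖ ^ 2 := by ring
  have hpenalty : ‖T‖ ^ 2 * s ^ 2 / 2 * ‖z‖ ^ 2 ≤ ‖T‖ ^ 2 / (2 * l) * s ^ 2 * ⟪z, S z⟫ := by
    calc ‖T‖ ^ 2 * s ^ 2 / 2 * ‖z‖ ^ 2 = ‖T‖ ^ 2 / (2 * l) * s ^ 2 * (l * ‖z‖ ^ 2) := by
          field_simp
      _ ≤ ‖T‖ ^ 2 / (2 * l) * s ^ 2 * ⟪z, S z⟫ := by gcongr; exact hS z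
  have hsquare : 0 ≤ ‖z‖ ^ 2 - 2 * (|s| * ‖T‖ * ‖z‖ ^ 2) + ‖T‖ ^ 2 * s ^ 2 * ‖z‖ ^ 2 :=
    calc 0 ≤ ‖z‖ ^ 2 * (1 - |s| * ‖T‖) ^ 2 := by positivity
      _ = _ := by rw [← sq_abs s]; ring
  linarith

theorem stmt_19_general (α ω₀ : ℝ) (hα : 0 < α) (hω₀ : 0 < ω₀)
    (P G : Matrix (Fin 2) (Fin 2) ℝ)
    (hP : P = !![α/(4*ω₀^2) + 2/α, 1/(2*ω₀); 1/(2*ω₀), 2/α])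
    (lmin : ℝ)
    (hroot : P.charpoly.IsRoot lmin)
    (hmin : ∀ μ : ℝ, P.charpoly.IsRoot μ → lmin ≤ μ)
    (b : ℝ)
    (hb : b = ‖Matrix.toEuclideanCLM (𝕜 := ℝ) G‖^2 / (2 * lmin)) :
    ∀ (z : EuclideanSpace ℝ (Fin 2)) (u : ℝ),
      -‖z‖^2 + (Real.exp u - 1) * ⟪z, (Matrix.toEuclideanCLM (𝕜 := ℝ) G) z⟫
        - b * (Real.exp u - 1)^2 * (1 + ⟪z, (Matrix.toEuclideanCLM (𝕜 := ℝ) P) z⟫)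
      ≤ -(1/2) * ‖z‖^2 - b * (Real.exp u - 1)^2 := by
  intro z u
  have hherm : P.IsHermitian := by
    rw [hP]; ext i j; fin_cases i <;> fin_cases j <;> simp
  have htr : 0 < P.trace := by rw [hP, trace_fin_two_of]; positivity
  have hdet : 0 < P.det := by
    rw [hP, det_fin_two_of]
    have hdet_eq :
        (α/(4*ω₀^2) + 2/α) * (2/α) - 1/(2*ω₀) * (1/(2*ω₀)) = 1/(4*ω₀^2) + 4/α^2 := by
      field_simp; ring
    rw [hdet_eq]; positivity
  subst hb
  exact neg_norm_sq_add_inner_sub_penalty_le _ _ (pos_of_isRoot_charpoly_fin_two htr hdet hroot)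
    (hherm.mul_norm_sq_le_inner_toEuclideanCLM hmin) z _

theorem stmt_19 (α ω₀ : ℝ) (hα : 0 < α) (hω₀ : 0 < ω₀)
    (A Λ P G : Matrix (Fin 2) (Fin 2) ℝ)
    (hA : A = !![0, ω₀; -ω₀, -α/2])
    (hΛ : Λ = !![0, 0; 0, -α/2])
    (hP : P = !![α/(4*ω₀^2) + 2/α, 1/(2*ω₀); 1/(2*ω₀), 2/α])
    (hLyap : P * A + Aᵀ * P = -1)
    (hG : G = P * Λ + Λᵀ * P)
    (lmin : ℝ)
    (hroot : P.charpoly.IsRoot lmin)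
    (hmin : ∀ μ : ℝ, P.charpoly.IsRoot μ → lmin ≤ μ)
    (b : ℝ)
    (hb : b = ‖Matrix.toEuclideanCLM (𝕜 := ℝ) G‖^2 / (2 * lmin)) :
    ∀ (z : EuclideanSpace ℝ (Fin 2)) (u : ℝ),
      -‖z‖^2 + (Real.exp u - 1) * ⟪z, (Matrix.toEuclideanCLM (𝕜 := ℝ) G) z⟫
        - b * (Real.exp u - 1)^2 * (1 + ⟪z, (Matrix.toEuclideanCLM (𝕜 := ℝ) P) z⟫)
      ≤ -(1/2) * ‖z‖^2 - b * (Real.exp u - 1)^2 :=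
  stmt_19_general α ω₀ hα hω₀ P G hP lmin hroot hmin b hb
end
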